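/- Let Ω ⊂ ℝⁿ be a bounded convex domain, x₀ ∈ ∂Ω, and let V be an open cone with vertex x₀ such that Ω ⊆ V, with V − x₀ contained in a wedge {(r cos θ, r sin θ, x₃, …, x_n) : r > 0, θ ∈ (0, μπ)} for some μ ∈ (0,1) (after a rotation). Let f be the solution of the minimal graph equation in Ω and f_V the solution of the minimal graph equation in V. Then f(x) ≤ f_V(x) for all x ∈ Ω; in particular, writing f_V(x) = |x − x₀| g_V((x−x₀)/|x−x₀|), one has f(x) ≤ |x − x₀| g_V((x−x₀)/|x−x₀|) for all x ∈ Ω. -/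

import Mathlib

open scoped BigOperators RealInnerProductSpace
open Metric Filter Topology

noncomputable section

/-- The partial derivative `∂_i f` at `x`. -/
def pd (n : ℕ) (f : EuclideanSpace ℝ (Fin n) → ℝ) (i : Fin n)
    (x : EuclideanSpace ℝ (Fin n)) : ℝ :=
  fderiv ℝ f x (EuclideanSpace.single i 1)

/-- The second partial derivative `∂_{ij} f` at `x`. -/
def pd2 (n : ℕ) (f : EuclideanSpace ℝ (Fin n) → ℝ) (i j : Fin n)
    (x : EuclideanSpace ℝ (Fin n)) : ℝ :=
  pd n (pd n f i) j x

/-- The minimal graph equation `Δf − (∂_i f ∂_j f ∂_{ij} f)/(1+|∇f|²) + n/f = 0` at `x`. -/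
def MinGraphEq (n : ℕ) (f : EuclideanSpace ℝ (Fin n) → ℝ)
    (x : EuclideanSpace ℝ (Fin n)) : Prop :=
  (∑ i, pd2 n f i i x)
    - (∑ i, ∑ j, pd n f i x * pd n f j x * pd2 n f i j x) / (1 + ∑ i, (pd n f i x) ^ 2)
    + (n : ℝ) / f x = 0

/-- `f` is a solution of the minimal graph equation in `Ω`:
`f ∈ C(cl Ω) ∩ C^∞(Ω)`, `f > 0` in `Ω`, `f = 0` on `∂Ω`, and the PDE holds in `Ω`. -/
def IsMinSol (n : ℕ) (Ω : Set (EuclideanSpace ℝ (Fin n)))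
    (f : EuclideanSpace ℝ (Fin n) → ℝ) : Prop :=
  ContinuousOn f (closure Ω) ∧ ContDiffOn ℝ (⊤ : ℕ∞) f Ω ∧ (∀ x ∈ Ω, 0 < f x) ∧
    (∀ x ∈ frontier Ω, f x = 0) ∧ ∀ x ∈ Ω, MinGraphEq n f x

/-- The planar wedge `{x : (x₁,x₂) = (r cos θ, r sin θ), r > 0, θ ∈ (0, μπ)} ⊂ ℝⁿ`. -/
def wedge (n : ℕ) (hn : 2 ≤ n) (μ : ℝ) : Set (EuclideanSpace ℝ (Fin n)) :=
  {x | ∃ r : ℝ, 0 < r ∧ ∃ θ ∈ Set.Ioo 0 (μ * Real.pi),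
      x ⟨0, by omega⟩ = r * Real.cos θ ∧ x ⟨1, by omega⟩ = r * Real.sin θ}

/-!
At a point `z` of `Ω` where `f - f_V` has a positive maximum, the gradients of `f` and `f_V`
agree and the Hessian of `f - f_V` is negative semidefinite. The second-order part of the
minimal graph operator is degenerate elliptic, so subtracting the two equations at `z` gives
`n / f z ≥ n / f_V z`, i.e. `f z ≤ f_V z`, which is absurd. On `∂Ω` we have `f = 0 ≤ f_V`, so the
maximum of `f - f_V` over the compact set `cl Ω` is nonpositive.
-/

open Set

theorem IsLocalMax.second_deriv_nonpos {g g' : ℝ → ℝ} {a c : ℝ} (hmax : IsLocalMax g a)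
    (hg : ∀ᶠ t in 𝓝 a, HasDerivAt g (g' t) t) (hg' : HasDerivAt g' c a) : c ≤ 0 := by
  -- If `c > 0`, then `g'` has the sign of `t - a` near `a`, so by the mean value theorem
  -- `g` increases to the right of `a`.
  by_contra! hc
  have hsign : ∀ᶠ t in 𝓝 a, SignType.sign (g' t) = SignType.sign (t - a) :=
    eventually_nhdsWithin_sign_eq_of_deriv_pos (hg'.deriv ▸ hc)
      (hmax.hasDerivAt_eq_zero hg.self_of_nhds)
  obtain ⟨ε, hε, hball⟩ := Metric.eventually_nhds_iff.1 (hg.and (hmax.and hsign))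
  set b := a + ε / 2
  have hab : a < b := by simp only [b]; linarith
  have hnear : ∀ t ∈ Icc a b, dist t a < ε := fun t ht => by
    rw [Real.dist_eq, abs_of_nonneg (by linarith [ht.1])]
    simp only [b] at ht; linarith [ht.2]
  obtain ⟨ξ, hξ, hslope⟩ := exists_hasDerivAt_eq_slope g g' hab
    (fun t ht => (hball (hnear t ht)).1.continuousAt.continuousWithinAt)
    (fun t ht => (hball (hnear t (Ioo_subset_Icc_self ht))).1)
  have hξpos : 0 < g' ξ := by
    have := (hball (hnear ξ (Ioo_subset_Icc_self hξ))).2.2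
    rwa [sign_pos (sub_pos.2 hξ.1), sign_eq_one_iff] at this
  have hgb : g b ≤ g a := (hball (hnear b (right_mem_Icc.2 hab.le))).2.1
  rw [hslope, div_pos_iff_of_pos_right (sub_pos.2 hab)] at hξpos
  linarith

theorem IsLocalMax.fderiv_fderiv_apply_self_nonpos {E : Type*} [NormedAddCommGroup E]
    [NormedSpace ℝ E] {h : E → ℝ} {z : E} (hmax : IsLocalMax h z) (hh : ContDiffAt ℝ 2 h z)
    (v : E) : fderiv ℝ (fderiv ℝ h) z v v ≤ 0 := by
  set line : ℝ → E := fun t => z + t • v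
  have hline : ∀ t, HasDerivAt line v t := fun t =>
    (((hasDerivAt_id t).smul_const v).const_add z).congr_deriv (one_smul ℝ v)
  have hline0 : line 0 = z := by simp [line]
  have hfirst : ∀ᶠ t in 𝓝 0, HasDerivAt (h ∘ line) (fderiv ℝ h (line t) v) t := by
    have := (hline 0).continuousAt.tendsto.eventually (hline0 ▸ hh.eventually (by simp))
    filter_upwards [this] with t ht
    exact (ht.differentiableAt (by norm_num)).hasFDerivAt.comp_hasDerivAt t (hline t)
  have hsecond :
      HasDerivAt (fun t => fderiv ℝ h (line t) v) (fderiv ℝ (fderiv ℝ h) z v v) 0 := by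
    have hd : DifferentiableAt ℝ (fderiv ℝ h) z :=
      (hh.fderiv_right (m := 1) le_rfl).differentiableAt one_ne_zero
    exact ((hd.hasFDerivAt.comp_hasDerivAt_of_eq 0 (hline 0) hline0.symm).clm_apply
      (hasDerivAt_const 0 v)).congr_deriv (by simp)
  exact ((hline0 ▸ hmax).comp_continuous (hline 0).continuousAt).second_deriv_nonpos
    hfirst hsecond

section PrincipalPart

variable {ι : Type*} [Fintype ι] [DecidableEq ι]

theorem sum_smul_map_single {F : Type*} [NormedAddCommGroup F] [NormedSpace ℝ F]
    (L : EuclideanSpace ℝ ι →L[ℝ] F) (p : EuclideanSpace ℝ ι) :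
    ∑ i, p i • L (EuclideanSpace.single i 1) = L p := by
  conv_rhs => rw [← (EuclideanSpace.basisFun ι ℝ).sum_repr p]
  simp

/-- The second-order part `Δf − ∂ᵢf ∂ⱼf ∂ᵢⱼf / (1 + |∇f|²)` of the minimal graph operator,
with the Hessian of `f` replaced by `B` and its gradient by `p`. -/
def minGraphPrincipalPart (B : EuclideanSpace ℝ ι →L[ℝ] EuclideanSpace ℝ ι →L[ℝ] ℝ)
    (p : EuclideanSpace ℝ ι) : ℝ :=
  ∑ i, B (EuclideanSpace.single i 1) (EuclideanSpace.single i 1) - B p p / (1 + ‖p‖ ^ 2)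

theorem minGraphPrincipalPart_sub
    (B₁ B₂ : EuclideanSpace ℝ ι →L[ℝ] EuclideanSpace ℝ ι →L[ℝ] ℝ) (p : EuclideanSpace ℝ ι) :
    minGraphPrincipalPart (B₁ - B₂) p
      = minGraphPrincipalPart B₁ p - minGraphPrincipalPart B₂ p := by
  simp only [minGraphPrincipalPart, sub_apply, Finset.sum_sub_distrib]
  ring

theorem minGraphPrincipalPart_nonpos {B : EuclideanSpace ℝ ι →L[ℝ] EuclideanSpace ℝ ι →L[ℝ] ℝ}
    (hB : ∀ v, B v v ≤ 0) (p : EuclideanSpace ℝ ι) : minGraphPrincipalPart B p ≤ 0 := by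
  -- `I - p pᵀ / (1 + |p|²) = ∑ᵢ wᵢ wᵢᵀ` for `wᵢ = eᵢ - c pᵢ p` as soon as
  -- `2c - c²|p|² = 1 / (1 + |p|²)`, which `c = 1 / (t (1 + t))` with `t = √(1 + |p|²)` solves.
  set e : ι → EuclideanSpace ℝ ι := fun i => EuclideanSpace.single i 1
  set t := √(1 + ‖p‖ ^ 2)
  have ht : 0 < t := by positivity
  have ht2 : ‖p‖ ^ 2 = t ^ 2 - 1 := by rw [Real.sq_sqrt (by positivity)]; ring
  set c := 1 / (t * (1 + t))
  have hc : 2 * c - c ^ 2 * ‖p‖ ^ 2 = 1 / (1 + ‖p‖ ^ 2) := by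
    rw [ht2]; simp only [c]; field_simp; ring
  have hBe : ∑ i, p i * B (e i) p = B p p := by
    simpa using congrArg (· p) (sum_smul_map_single B p)
  have hpe : ∑ i, p i * B p (e i) = B p p := by simpa using sum_smul_map_single (B p) p
  have hnorm : ∑ i, p i ^ 2 = ‖p‖ ^ 2 := (EuclideanSpace.real_norm_sq_eq p).symm
  have hexpand :
      ∑ i, B (e i - (c * p i) • p) (e i - (c * p i) • p) = minGraphPrincipalPart B p := by
    calc _ = ∑ i, (B (e i) (e i) - c * (p i * B (e i) p) - c * (p i * B p (e i))
          + c ^ 2 * p i ^ 2 * B p p) := Finset.sum_congr rfl fun i _ => by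
            simp only [map_sub, map_smul, sub_apply, smul_apply, smul_eq_mul]
            ring
      _ = minGraphPrincipalPart B p := by
        simp only [Finset.sum_add_distrib, Finset.sum_sub_distrib, ← Finset.mul_sum,
          ← Finset.sum_mul, hBe, hpe, hnorm, minGraphPrincipalPart]
        linear_combination (-B p p) * hc
  rw [← hexpand]
  exact Finset.sum_nonpos fun i _ => hB _

end PrincipalPart

section MinGraphEq

variable {n : ℕ}

theorem pd_eq_gradient_apply (f : EuclideanSpace ℝ (Fin n) → ℝ) (i : Fin n)
    (x : EuclideanSpace ℝ (Fin n)) : pd n f i x = gradient f x i := by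
  simp [pd, gradient, ← InnerProductSpace.toDual_symm_apply, EuclideanSpace.inner_single_right]

theorem pd2_eq_fderiv_fderiv {f : EuclideanSpace ℝ (Fin n) → ℝ} {x : EuclideanSpace ℝ (Fin n)}
    (hf : ContDiffAt ℝ 2 f x) (i j : Fin n) :
    pd2 n f i j x
      = fderiv ℝ (fderiv ℝ f) x (EuclideanSpace.single j 1) (EuclideanSpace.single i 1) := by
  have hd : DifferentiableAt ℝ (fderiv ℝ f) x :=
    (hf.fderiv_right (m := 1) le_rfl).differentiableAt one_ne_zero
  unfold pd2 pd
  rw [fderiv_clm_apply hd (differentiableAt_const _)]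
  simp

theorem minGraphEq_iff {f : EuclideanSpace ℝ (Fin n) → ℝ} {x : EuclideanSpace ℝ (Fin n)}
    (hf : ContDiffAt ℝ 2 f x) :
    MinGraphEq n f x ↔
      minGraphPrincipalPart (fderiv ℝ (fderiv ℝ f) x) (gradient f x) + n / f x = 0 := by
  set H := fderiv ℝ (fderiv ℝ f) x
  set p := gradient f x
  have hcross : ∑ i, ∑ j, pd n f i x * pd n f j x * pd2 n f i j x = H p p := by
    simp only [pd_eq_gradient_apply, pd2_eq_fderiv_fderiv hf]
    calc _ = ∑ i, p i *
          (∑ j, p j • H (EuclideanSpace.single j 1)) (EuclideanSpace.single i 1) := by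
          simp only [sum_apply, smul_apply, smul_eq_mul, Finset.mul_sum]
          exact Finset.sum_congr rfl fun i _ => Finset.sum_congr rfl fun j _ => by ring
      _ = H p p := by
        rw [sum_smul_map_single]
        simpa using sum_smul_map_single (H p) p
  have hnorm : ∑ i, pd n f i x ^ 2 = ‖p‖ ^ 2 := by
    simp only [pd_eq_gradient_apply, EuclideanSpace.real_norm_sq_eq]; rfl
  rw [MinGraphEq, hcross, hnorm, minGraphPrincipalPart]
  simp only [pd2_eq_fderiv_fderiv hf, H]

theorem MinGraphEq.le_of_isLocalMax_sub (hn : 0 < n) {f g : EuclideanSpace ℝ (Fin n) → ℝ}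
    {z : EuclideanSpace ℝ (Fin n)} (hf : ContDiffAt ℝ 2 f z) (hg : ContDiffAt ℝ 2 g z)
    (hfz : MinGraphEq n f z) (hgz : MinGraphEq n g z)
    (hmax : IsLocalMax (fun y => f y - g y) z) (hgpos : 0 < g z) : f z ≤ g z := by
  by_contra! hlt
  have hgrad : gradient f z = gradient g z := by
    have hcrit := hmax.fderiv_eq_zero
    rw [fderiv_fun_sub (hf.differentiableAt two_ne_zero) (hg.differentiableAt two_ne_zero),
      sub_eq_zero] at hcrit
    simp only [gradient, hcrit]
  have hhess : ∀ v w, fderiv ℝ (fderiv ℝ fun y => f y - g y) z v w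
      = (fderiv ℝ (fderiv ℝ f) z - fderiv ℝ (fderiv ℝ g) z) v w := fun v w => by
    calc _ = iteratedFDeriv ℝ 2 (f - g) z ![v, w] := (iteratedFDeriv_two_apply _ _ _).symm
      _ = _ := by simp [iteratedFDeriv_sub_apply hf hg, iteratedFDeriv_two_apply]
  have hell := minGraphPrincipalPart_nonpos
    (fun v => hhess v v ▸ hmax.fderiv_fderiv_apply_self_nonpos (hf.sub hg) v) (gradient f z)
  rw [minGraphPrincipalPart_sub] at hell
  rw [minGraphEq_iff hf] at hfz
  rw [minGraphEq_iff hg, ← hgrad] at hgz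
  have hquot : (n : ℝ) / f z < n / g z :=
    div_lt_div_of_pos_left (by exact_mod_cast hn) hgpos hlt
  linarith

theorem MinGraphEq.le_of_frontier_le (hn : 0 < n) {Ω : Set (EuclideanSpace ℝ (Fin n))}
    (hΩo : IsOpen Ω) (hΩb : Bornology.IsBounded Ω) {f g : EuclideanSpace ℝ (Fin n) → ℝ}
    (hfc : ContinuousOn f (closure Ω)) (hgc : ContinuousOn g (closure Ω))
    (hfs : ContDiffOn ℝ 2 f Ω) (hgs : ContDiffOn ℝ 2 g Ω)
    (hfeq : ∀ x ∈ Ω, MinGraphEq n f x) (hgeq : ∀ x ∈ Ω, MinGraphEq n g x)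
    (hgpos : ∀ x ∈ Ω, 0 < g x) (hfr : ∀ x ∈ frontier Ω, f x ≤ g x)
    {x : EuclideanSpace ℝ (Fin n)} (hx : x ∈ Ω) : f x ≤ g x := by
  obtain ⟨z, hz, hzmax⟩ :=
    hΩb.isCompact_closure.exists_isMaxOn ⟨x, subset_closure hx⟩ (hfc.sub hgc)
  have hzle : f z ≤ g z := by
    by_cases hzΩ : z ∈ Ω
    · have hnhds := hΩo.mem_nhds hzΩ
      exact MinGraphEq.le_of_isLocalMax_sub hn (hfs.contDiffAt hnhds) (hgs.contDiffAt hnhds)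
        (hfeq z hzΩ) (hgeq z hzΩ) (hzmax.isLocalMax (mem_of_superset hnhds subset_closure))
        (hgpos z hzΩ)
    · exact hfr z ⟨hz, by rwa [hΩo.interior_eq]⟩
  have hxz : f x - g x ≤ f z - g z := hzmax (subset_closure hx)
  linarith

end MinGraphEq

theorem stmt17_general (n : ℕ) (hn : 2 ≤ n) (Ω : Set (EuclideanSpace ℝ (Fin n)))
    (hΩo : IsOpen Ω) (hΩb : Bornology.IsBounded Ω)
    (x₀ : EuclideanSpace ℝ (Fin n))
    (V : Set (EuclideanSpace ℝ (Fin n))) (hΩV : Ω ⊆ V)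
    (f fV : EuclideanSpace ℝ (Fin n) → ℝ)
    (hf : IsMinSol n Ω f) (hfV : IsMinSol n V fV)
    -- `f_V` is homogeneous of degree one about `x₀`:
    (gV : EuclideanSpace ℝ (Fin n) → ℝ)
    (hgV : ∀ x ∈ V, fV x = ‖x - x₀‖ * gV (‖x - x₀‖⁻¹ • (x - x₀))) :
    ∀ x ∈ Ω, f x ≤ fV x ∧ f x ≤ ‖x - x₀‖ * gV (‖x - x₀‖⁻¹ • (x - x₀)) := by
  obtain ⟨hfc, hfs, -, hf0, hfeq⟩ := hf
  obtain ⟨hVc, hVs, hVpos, -, hVeq⟩ := hfV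
  have hclosure : closure Ω ⊆ closure V := closure_mono hΩV
  have hVnonneg : ∀ x ∈ closure V, 0 ≤ fV x := fun x hx =>
    le_on_closure (fun y hy => (hVpos y hy).le) continuousOn_const hVc hx
  intro x hx
  have hle : f x ≤ fV x :=
    MinGraphEq.le_of_frontier_le (by omega) hΩo hΩb hfc (hVc.mono hclosure)
      (hfs.of_le (WithTop.coe_le_coe.2 le_top))
      ((hVs.mono hΩV).of_le (WithTop.coe_le_coe.2 le_top))
      hfeq (fun y hy => hVeq y (hΩV hy)) (fun y hy => hVpos y (hΩV hy))
      (fun y hy => hf0 y hy ▸ hVnonneg y (hclosure (frontier_subset_closure hy))) hx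
  exact ⟨hle, hgV x (hΩV hx) ▸ hle⟩

/-- If the bounded convex domain `Ω` is contained in an open cone `V`
with vertex `x₀ ∈ ∂Ω` whose translate `V − x₀` lies (after a rotation) in a wedge of
opening angle `μπ < π`, then the solution `f` in `Ω` is dominated by the solution `f_V`
in the cone; in particular, writing `f_V(x) = |x−x₀| g_V((x−x₀)/|x−x₀|)`, one gets
`f(x) ≤ |x−x₀| g_V((x−x₀)/|x−x₀|)` on `Ω`. -/
theorem stmt17 (n : ℕ) (hn : 2 ≤ n) (Ω : Set (EuclideanSpace ℝ (Fin n)))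
    (hΩo : IsOpen Ω) (hΩb : Bornology.IsBounded Ω) (hΩc : Convex ℝ Ω)
    (x₀ : EuclideanSpace ℝ (Fin n)) (hx₀ : x₀ ∈ frontier Ω)
    (V : Set (EuclideanSpace ℝ (Fin n))) (hVo : IsOpen V) (hΩV : Ω ⊆ V)
    -- `V` is a cone with vertex `x₀`:
    (hVcone : ∀ l : ℝ, 0 < l → ∀ x, x₀ + l • (x - x₀) ∈ V ↔ x ∈ V)
    (μ : ℝ) (hμ : μ ∈ Set.Ioo (0:ℝ) 1)
    -- after a rotation, `V − x₀` is contained in the wedge of angle `μπ`: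
    (e : EuclideanSpace ℝ (Fin n) ≃ₗᵢ[ℝ] EuclideanSpace ℝ (Fin n))
    (hVwedge : (fun x => e (x - x₀)) '' V ⊆ wedge n hn μ)
    (f fV : EuclideanSpace ℝ (Fin n) → ℝ)
    (hf : IsMinSol n Ω f) (hfV : IsMinSol n V fV)
    -- `f_V` is homogeneous of degree one about `x₀`:
    (gV : EuclideanSpace ℝ (Fin n) → ℝ)
    (hgV : ∀ x ∈ V, fV x = ‖x - x₀‖ * gV (‖x - x₀‖⁻¹ • (x - x₀))) :
    ∀ x ∈ Ω, f x ≤ fV x ∧ f x ≤ ‖x - x₀‖ * gV (‖x - x₀‖⁻¹ • (x - x₀)) :=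
  stmt17_general n hn Ω hΩo hΩb x₀ V hΩV f fV hf hfV gV hgV
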